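/- Let (M,g) be a 3-dimensional semi-Riemannian manifold with a lightlike Killing vector field ξ and vector fields W, N such that: g(W,W)=1, g(ξ,N)=1, g(ξ,W)=0, g(N,W)=0, g(N,N)=0, [ξ,W]=0, [ξ,N]=0, and [W,N]=0. Define 1-forms μ(X)=g(X,ξ) and η(X)=g(X,W). Then dμ = 0 and dη = 0. -/

import Mathlib

/-!
Both `μ = g(·, ξ)` and `η = g(·, W)` take only the constant values `0` and `1` on the frame
`{ξ, W, N}`, and the frame fields pairwise commute, so `dμ` and `dη` vanish on every pair of
frame fields. Since `dθ(X, Y) = X(θ Y) − Y(θ X) − θ [X, Y]` is `A`-bilinear and alternating,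
vanishing on a spanning set forces it to vanish identically.
-/

section OneForm

variable {A V : Type*} [CommRing A] [LieRing V] [Module A V]

/-- `dθ`, where `D X` is differentiation along `X`. -/
def oneFormD (D : V → A → A) (θ : V →ₗ[A] A) (X Y : V) : A :=
  D X (θ Y) - D Y (θ X) - θ ⁅X, Y⁆

variable (D : V → A → A) (θ : V →ₗ[A] A)
  (hD_add : ∀ (X : V) (a b : A), D X (a + b) = D X a + D X b)
  (hD_mul : ∀ (X : V) (a b : A), D X (a * b) = D X a * b + a * D X b)
  (hD_addX : ∀ (X Y : V) (a : A), D (X + Y) a = D X a + D Y a)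
  (hD_smulX : ∀ (b : A) (X : V) (a : A), D (b • X) a = b * D X a)
  (hbr_smul : ∀ (X Y : V) (a : A), ⁅X, a • Y⁆ = a • ⁅X, Y⁆ + (D X a) • Y)

theorem oneFormD_swap (X Y : V) : oneFormD D θ X Y = -oneFormD D θ Y X := by
  unfold oneFormD
  rw [← lie_skew, map_neg]
  ring

include hD_add hD_addX in
theorem oneFormD_add_left (X X' Y : V) :
    oneFormD D θ (X + X') Y = oneFormD D θ X Y + oneFormD D θ X' Y := by
  unfold oneFormD
  rw [hD_addX, map_add, hD_add, add_lie, map_add]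
  ring

include hD_mul hD_smulX hbr_smul in
theorem oneFormD_smul_left (a : A) (X Y : V) :
    oneFormD D θ (a • X) Y = a * oneFormD D θ X Y := by
  have hbr : ⁅a • X, Y⁆ = a • ⁅X, Y⁆ - D Y a • X := by
    rw [← lie_skew, hbr_smul, ← lie_skew Y X]
    module
  unfold oneFormD
  rw [hD_smulX, map_smul, smul_eq_mul, hD_mul, hbr, map_sub, map_smul, map_smul]
  simp only [smul_eq_mul]
  ring

include hD_add hD_mul hD_addX hD_smulX hbr_smul

theorem oneFormD_eq_zero_of_mem_span_left {s : Set V} {Y : V}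
    (h : ∀ X ∈ s, oneFormD D θ X Y = 0) {X : V} (hX : X ∈ Submodule.span A s) :
    oneFormD D θ X Y = 0 := by
  induction hX using Submodule.span_induction with
  | mem X hX => exact h X hX
  | zero => simpa using oneFormD_smul_left D θ hD_mul hD_smulX hbr_smul 0 0 Y
  | add X X' _ _ hX hX' => rw [oneFormD_add_left D θ hD_add hD_addX, hX, hX', add_zero]
  | smul a X _ hX => rw [oneFormD_smul_left D θ hD_mul hD_smulX hbr_smul, hX, mul_zero]

theorem oneFormD_eq_zero_of_span_eq_top {s : Set V} (hs : Submodule.span A s = ⊤)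
    (h : ∀ X ∈ s, ∀ Y ∈ s, oneFormD D θ X Y = 0) (X Y : V) : oneFormD D θ X Y = 0 := by
  have hs_left : ∀ X' ∈ s, oneFormD D θ X' Y = 0 := fun X' hX' => by
    rw [oneFormD_swap, neg_eq_zero]
    exact oneFormD_eq_zero_of_mem_span_left D θ hD_add hD_mul hD_addX hD_smulX hbr_smul
      (fun Z hZ => h Z hZ X' hX') (hs ▸ Submodule.mem_top)
  exact oneFormD_eq_zero_of_mem_span_left D θ hD_add hD_mul hD_addX hD_smulX hbr_smul
    hs_left (hs ▸ Submodule.mem_top)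

theorem oneFormD_eq_zero_of_commuting_frame {s : Set V} (hs : Submodule.span A s = ⊤)
    (hcomm : ∀ X ∈ s, ∀ Y ∈ s, ⁅X, Y⁆ = 0) (hconst : ∀ X ∈ s, ∀ Y ∈ s, D X (θ Y) = 0)
    (X Y : V) : oneFormD D θ X Y = 0 :=
  oneFormD_eq_zero_of_span_eq_top D θ hD_add hD_mul hD_addX hD_smulX hbr_smul hs
    (fun X hX Y hY => by simp [oneFormD, hcomm X hX Y hY, hconst X hX Y hY, hconst Y hY X hX])
    X Y

end OneForm

theorem map_one_of_leibniz {A : Type*} [Ring A] {δ : A → A}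
    (hδ : ∀ a b, δ (a * b) = δ a * b + a * δ b) : δ 1 = 0 := by
  simpa using hδ 1 1

theorem stmt_11_general {A V : Type*} [CommRing A] [LieRing V] [Module A V]
    (D : V → A → A)
    (hD_add : ∀ (X : V) (a b : A), D X (a + b) = D X a + D X b)
    (hD_mul : ∀ (X : V) (a b : A), D X (a * b) = D X a * b + a * D X b)
    (hD_addX : ∀ (X Y : V) (a : A), D (X + Y) a = D X a + D Y a)
    (hD_smulX : ∀ (b : A) (X : V) (a : A), D (b • X) a = b * D X a)
    (hbr_smul : ∀ (X Y : V) (a : A), ⁅X, a • Y⁆ = a • ⁅X, Y⁆ + (D X a) • Y)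
    (g : V → V → A)
    (hg_addl : ∀ X Y Z : V, g (X + Y) Z = g X Z + g Y Z)
    (hg_smull : ∀ (a : A) (X Y : V), g (a • X) Y = a * g X Y)
    (hg_symm : ∀ X Y : V, g X Y = g Y X)
    (ξ W N : V)
    (hξξ : g ξ ξ = 0) (hWW : g W W = 1) (hξN : g ξ N = 1)
    (hξW : g ξ W = 0) (hNW : g N W = 0)
    (hbξW : ⁅ξ, W⁆ = 0) (hbξN : ⁅ξ, N⁆ = 0) (hbWN : ⁅W, N⁆ = 0)
    -- dim M = 3 : {ξ, W, N} is a frame of T(M)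
    (hframe : ∀ Z : V, ∃ a b c : A, Z = a • ξ + b • W + c • N) :
    (∀ X Y : V, D X (g Y ξ) - D Y (g X ξ) - g ⁅X, Y⁆ ξ = 0) ∧
    (∀ X Y : V, D X (g Y W) - D Y (g X W) - g ⁅X, Y⁆ W = 0) := by
  set s : Set V := {ξ, W, N}
  have hspan : Submodule.span A s = ⊤ := Submodule.eq_top_iff'.mpr fun Z => by
    obtain ⟨a, b, c, rfl⟩ := hframe Z
    have mem : ∀ e ∈ s, e ∈ Submodule.span A s := fun e he => Submodule.subset_span he
    refine add_mem (add_mem ?_ ?_) ?_ <;> refine Submodule.smul_mem _ _ (mem _ ?_) <;> simp [s]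
  have hcomm : ∀ X ∈ s, ∀ Y ∈ s, ⁅X, Y⁆ = 0 := by
    have hbWξ : ⁅W, ξ⁆ = 0 := by rw [← lie_skew, hbξW, neg_zero]
    have hbNξ : ⁅N, ξ⁆ = 0 := by rw [← lie_skew, hbξN, neg_zero]
    have hbNW : ⁅N, W⁆ = 0 := by rw [← lie_skew, hbWN, neg_zero]
    simp only [s, Set.mem_insert_iff, Set.mem_singleton_iff]
    rintro X (rfl | rfl | rfl) Y (rfl | rfl | rfl) <;> first | exact lie_self _ | assumption
  have closed : ∀ v : V, (∀ Y ∈ s, g Y v = 0 ∨ g Y v = 1) →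
      ∀ X Y : V, D X (g Y v) - D Y (g X v) - g ⁅X, Y⁆ v = 0 := fun v hv =>
    oneFormD_eq_zero_of_commuting_frame D ⟨⟨(g · v), (hg_addl · · v)⟩, (hg_smull · · v)⟩
      hD_add hD_mul hD_addX hD_smulX hbr_smul hspan hcomm fun X _ Y hY => by
        rcases hv Y hY with h | h <;> simp only [LinearMap.coe_mk, AddHom.coe_mk, h]
        exacts [(AddMonoidHom.mk' (D X) (hD_add X)).map_zero, map_one_of_leibniz (hD_mul X)]
  refine ⟨closed ξ ?_, closed W ?_⟩ <;>
    simp [s, hξξ, hWW, hξN, hξW, hNW, hg_symm W ξ, hg_symm N ξ]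

/-- (abstract model: `A` the ring of smooth functions, `V` the Lie algebra
of vector fields, an `A`-module, `D X` directional derivative, `g` the metric.)
`M` is 3-dimensional with frame `{ξ, W, N}`; `ξ` is a lightlike Killing field, and
`g(W,W)=1, g(ξ,N)=1, g(ξ,W)=g(N,W)=g(N,N)=g(ξ,ξ)=0`, `[ξ,W]=[ξ,N]=[W,N]=0`.
With `μ = g(·,ξ)` and `η = g(·,W)`, one has `dμ = 0` and `dη = 0`, where for a 1-form θ,
`dθ(X,Y) = X(θ(Y)) − Y(θ(X)) − θ([X,Y])`. -/
theorem stmt_11 {A V : Type*} [CommRing A] [LieRing V] [Module A V]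
    (D : V → A → A)
    (hD_add : ∀ (X : V) (a b : A), D X (a + b) = D X a + D X b)
    (hD_mul : ∀ (X : V) (a b : A), D X (a * b) = D X a * b + a * D X b)
    (hD_addX : ∀ (X Y : V) (a : A), D (X + Y) a = D X a + D Y a)
    (hD_smulX : ∀ (b : A) (X : V) (a : A), D (b • X) a = b * D X a)
    (hbr_smul : ∀ (X Y : V) (a : A), ⁅X, a • Y⁆ = a • ⁅X, Y⁆ + (D X a) • Y)
    (g : V → V → A)
    (hg_addl : ∀ X Y Z : V, g (X + Y) Z = g X Z + g Y Z)
    (hg_smull : ∀ (a : A) (X Y : V), g (a • X) Y = a * g X Y)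
    (hg_symm : ∀ X Y : V, g X Y = g Y X)
    (ξ W N : V)
    (hKilling : ∀ X Y : V, D ξ (g X Y) = g ⁅ξ, X⁆ Y + g X ⁅ξ, Y⁆)
    (hξξ : g ξ ξ = 0) (hWW : g W W = 1) (hξN : g ξ N = 1)
    (hξW : g ξ W = 0) (hNW : g N W = 0) (hNN : g N N = 0)
    (hbξW : ⁅ξ, W⁆ = 0) (hbξN : ⁅ξ, N⁆ = 0) (hbWN : ⁅W, N⁆ = 0)
    -- dim M = 3 : {ξ, W, N} is a frame of T(M)
    (hframe : ∀ Z : V, ∃ a b c : A, Z = a • ξ + b • W + c • N) :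
    (∀ X Y : V, D X (g Y ξ) - D Y (g X ξ) - g ⁅X, Y⁆ ξ = 0) ∧
    (∀ X Y : V, D X (g Y W) - D Y (g X W) - g ⁅X, Y⁆ W = 0) :=
  stmt_11_general D hD_add hD_mul hD_addX hD_smulX hbr_smul g hg_addl hg_smull hg_symm ξ W N hξξ hWW
    hξN hξW hNW hbξW hbξN hbWN hframe
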